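/- arXiv:1203.6328 — 2 statements merged into one kernel-verified Lean document; each statement's English description precedes it below -/
import Mathlib

section
/- Let n ≥ 2 and g ∈ SL(n,ℝ). Let y₁,…,y_{n−1} > 0 be the Iwasawa coordinates of g, i.e. g = x·a_{y₁,…,y_{n−1}}·ξ with x ∈ N(n,ℝ) and ξ ∈ SO(n,ℝ). Then e^{−2σ(g)} ≤ y₁ ≤ e^{2σ(g)}, and for every j with 2 ≤ j ≤ n−1 one has e^{−4σ(g)} ≤ y_j ≤ e^{4σ(g)}. -/
/-!
Right-multiplying by `ξ⁻¹` turns `g` into the upper triangular matrix `T = x * a_y`, whose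
diagonal is that of `a_y`. Since `T = ξ₁ * exp (diag a) * (ξ₂ * ξ⁻¹)`, its L² operator norm is
`max_i exp (a i) ≤ exp σ`, and likewise for `T⁻¹`, which is upper triangular with the reciprocal
diagonal. Entries are bounded by the operator norm, so each diagonal entry of `a_y` has absolute
value in `[exp (-σ), exp σ]`, and `y_j` is the ratio of two consecutive ones.
-/

open scoped BigOperators

/-- `N(n,ℝ)`: real upper triangular matrices with all diagonal entries equal to `1`. -/
def IsUnipotentUpper {n : ℕ} (x : Matrix (Fin n) (Fin n) ℝ) : Prop :=
  (∀ i j : Fin n, j < i → x i j = 0) ∧ ∀ i : Fin n, x i i = 1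

/-- membership in `SO(n,ℝ)`. -/
def IsSpecialOrthogonal {n : ℕ} (ξ : Matrix (Fin n) (Fin n) ℝ) : Prop :=
  ξ * ξ.transpose = 1 ∧ ξ.det = 1

/-- The determinant-one diagonal matrix `a_{y₁,…,y_{n−1}}`:
`(∏_{j=1}^{n−1} y_j^{n−j})^{−1/n} · diag(y₁⋯y_{n−1}, y₁⋯y_{n−2}, …, y₁, 1)`. -/
noncomputable def iwasawaA (n : ℕ) (y : ℕ → ℝ) : Matrix (Fin n) (Fin n) ℝ :=
  ((∏ j ∈ Finset.Icc 1 (n - 1), (y j) ^ ((n : ℝ) - j)) ^ (-(1 / (n : ℝ)))) •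
    Matrix.diagonal (fun i : Fin n => ∏ k ∈ Finset.Icc 1 (n - 1 - i.val), y k)

open Matrix
open scoped Matrix.Norms.L2Operator

namespace Matrix

section L2OpNorm

variable {𝕜 : Type*} [RCLike 𝕜] {m n : Type*} [Fintype m] [Fintype n] [DecidableEq n]

theorem norm_apply_le_l2_opNorm (A : Matrix m n 𝕜) (i : m) (j : n) : ‖A i j‖ ≤ ‖A‖ := by
  have hcol := A.l2_opNorm_mulVec (EuclideanSpace.single j 1)
  have hentry := PiLp.norm_apply_le ((EuclideanSpace.equiv m 𝕜).symm (A *ᵥ Pi.single j 1)) i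
  simpa using hentry.trans hcol

theorem l2_opNorm_unitary_mul_diagonal_mul_unitary {U V : Matrix n n 𝕜}
    (hU : U ∈ unitaryGroup n 𝕜) (hV : V ∈ unitaryGroup n 𝕜) (d : n → 𝕜) :
    ‖U * diagonal d * V‖ = ‖d‖ := by
  rw [CStarRing.norm_mul_mem_unitary _ hV, CStarRing.norm_mem_unitary_mul _ hU,
    l2_opNorm_diagonal]

end L2OpNorm

section UpperTriangular

variable {R : Type*} [CommRing R] {m : Type*} [Fintype m] [LinearOrder m]
  {M N : Matrix m m R}

theorem BlockTriangular.mul_apply_self (hM : M.BlockTriangular id) (hN : N.BlockTriangular id)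
    (i : m) : (M * N) i i = M i i * N i i := by
  rw [mul_apply]
  refine Finset.sum_eq_single i (fun k _ hki => ?_) (by simp)
  rcases hki.lt_or_gt with hk | hk
  · rw [hM hk, zero_mul]
  · rw [hN hk, mul_zero]

theorem BlockTriangular.apply_self_mul_apply_self_of_mul_eq_one [DecidableEq m]
    (hM : M.BlockTriangular id) (hMN : M * N = 1) (i : m) : M i i * N i i = 1 := by
  let := invertibleOfRightInverse M N hMN
  have hN : N.BlockTriangular id :=
    inv_eq_right_inv hMN ▸ blockTriangular_inv_of_blockTriangular hM
  rw [← hM.mul_apply_self hN, hMN, one_apply_eq]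

end UpperTriangular

end Matrix

theorem abs_le_sqrt_sum_sq {ι : Type*} [Fintype ι] (a : ι → ℝ) (i : ι) :
    |a i| ≤ Real.sqrt (∑ k, a k ^ 2) :=
  Real.abs_le_sqrt (Finset.single_le_sum (f := fun k => a k ^ 2) (fun _ _ => sq_nonneg _)
    (Finset.mem_univ i))

theorem norm_exp_comp_le {ι : Type*} [Fintype ι] {a : ι → ℝ} {s : ℝ} (has : ∀ i, |a i| ≤ s) :
    ‖fun i => Real.exp (a i)‖ ≤ Real.exp s :=
  (pi_norm_le_iff_of_nonneg (Real.exp_pos s).le).2 fun i => by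
    rw [Real.norm_eq_abs, abs_of_pos (Real.exp_pos _)]
    exact Real.exp_le_exp.2 (le_of_abs_le (has i))

theorem abs_mem_Icc_exp_two_mul_of_eq_mul {p q t s : ℝ}
    (hp : |p| ∈ Set.Icc (Real.exp (-s)) (Real.exp s))
    (hq : |q| ∈ Set.Icc (Real.exp (-s)) (Real.exp s)) (h : p = q * t) :
    |t| ∈ Set.Icc (Real.exp (-(2 * s))) (Real.exp (2 * s)) := by
  have hq0 : 0 < |q| := (Real.exp_pos _).trans_le hq.1
  have ht : |t| = |p| / |q| := by rw [h, abs_mul, mul_div_cancel_left₀ _ hq0.ne']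
  have hinv : Real.exp s * Real.exp (-s) = 1 := by
    rw [← Real.exp_add, add_neg_cancel, Real.exp_zero]
  have hpos := Real.exp_pos s
  have hneg := Real.exp_pos (-s)
  rw [ht, two_mul, neg_add, Real.exp_add, Real.exp_add, Set.mem_Icc, le_div_iff₀ hq0,
    div_le_iff₀ hq0]
  constructor <;> nlinarith [hp.1, hp.2, hq.1, hq.2]

theorem abs_apply_self_mem_Icc_of_eq_unitary_mul_diagonal_exp_mul_unitary {m : Type*} [Fintype m]
    [DecidableEq m] [LinearOrder m] {T U V : Matrix m m ℝ} (hT : T.BlockTriangular id)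
    (hU : U ∈ unitaryGroup m ℝ) (hV : V ∈ unitaryGroup m ℝ) {a : m → ℝ} {s : ℝ}
    (has : ∀ i, |a i| ≤ s) (hpolar : T = U * diagonal (fun i => Real.exp (a i)) * V) (i : m) :
    |T i i| ∈ Set.Icc (Real.exp (-s)) (Real.exp s) := by
  set S := star V * diagonal (fun i => Real.exp (-a i)) * star U
  have hTS : T * S = 1 := by
    have hexp : diagonal (fun i => Real.exp (a i)) * diagonal (fun i => Real.exp (-a i)) = 1 := by
      simp [← Real.exp_add]
    calc T * S = U * (diagonal (fun i => Real.exp (a i)) * (V * star V) *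
          diagonal (fun i => Real.exp (-a i))) * star U := by simp only [hpolar, S, mul_assoc]
      _ = 1 := by simp [hV, hU, hexp]
  have hTle : |T i i| ≤ Real.exp s :=
    calc |T i i| ≤ ‖T‖ := T.norm_apply_le_l2_opNorm i i
      _ ≤ Real.exp s := by
        rw [hpolar, l2_opNorm_unitary_mul_diagonal_mul_unitary hU hV]
        exact norm_exp_comp_le has
  have hSle : |S i i| ≤ Real.exp s :=
    calc |S i i| ≤ ‖S‖ := S.norm_apply_le_l2_opNorm i i
      _ ≤ Real.exp s := by
        rw [l2_opNorm_unitary_mul_diagonal_mul_unitary (Unitary.star_mem hV) (Unitary.star_mem hU)]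
        exact norm_exp_comp_le fun i => (abs_neg (a i)).trans_le (has i)
  have hprod : |T i i| * |S i i| = 1 := by
    rw [← abs_mul, hT.apply_self_mul_apply_self_of_mul_eq_one hTS, abs_one]
  refine ⟨?_, hTle⟩
  rw [Real.exp_neg, inv_le_iff_one_le_mul₀ (Real.exp_pos s), ← hprod]
  exact mul_le_mul_of_nonneg_left hSle (abs_nonneg _)

section Iwasawa

variable {n : ℕ}

theorem IsSpecialOrthogonal.mem_unitaryGroup {ξ : Matrix (Fin n) (Fin n) ℝ}
    (hξ : IsSpecialOrthogonal ξ) : ξ ∈ unitaryGroup (Fin n) ℝ := by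
  rw [mem_unitaryGroup_iff, star_eq_conjTranspose, conjTranspose_eq_transpose_of_trivial]
  exact hξ.1

theorem IsUnipotentUpper.blockTriangular {x : Matrix (Fin n) (Fin n) ℝ}
    (hx : IsUnipotentUpper x) : x.BlockTriangular id :=
  hx.1

theorem iwasawaA_blockTriangular (y : ℕ → ℝ) : (iwasawaA n y).BlockTriangular id := by
  rw [iwasawaA, ← diagonal_smul]
  exact blockTriangular_diagonal _

theorem IsUnipotentUpper.mul_iwasawaA_apply_self {x : Matrix (Fin n) (Fin n) ℝ}
    (hx : IsUnipotentUpper x) (y : ℕ → ℝ) (i : Fin n) :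
    (x * iwasawaA n y) i i = iwasawaA n y i i := by
  rw [hx.blockTriangular.mul_apply_self (iwasawaA_blockTriangular y), hx.2, one_mul]

theorem iwasawaA_apply_self_eq_mul (y : ℕ → ℝ) {j : ℕ} (hj : 1 ≤ j) (hjn : j ≤ n - 1) :
    iwasawaA n y ⟨n - 1 - j, by omega⟩ ⟨n - 1 - j, by omega⟩ =
      iwasawaA n y ⟨n - j, by omega⟩ ⟨n - j, by omega⟩ * y j := by
  have hprod : ∏ k ∈ Finset.Icc 1 j, y k = (∏ k ∈ Finset.Icc 1 (j - 1), y k) * y j := by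
    obtain ⟨i, rfl⟩ := Nat.exists_eq_add_of_le' hj
    simpa using Finset.prod_Icc_succ_top (Nat.le_add_left 1 i) y
  simp only [iwasawaA, Matrix.smul_apply, diagonal_apply_eq, smul_eq_mul]
  rw [show n - 1 - (n - 1 - j) = j by omega, show n - 1 - (n - j) = j - 1 by omega, hprod,
    mul_assoc]

end Iwasawa

theorem stmt0_general (n : ℕ) (hn : 2 ≤ n)
    (g x ξ ξ₁ ξ₂ : Matrix (Fin n) (Fin n) ℝ) (a : Fin n → ℝ) (y : ℕ → ℝ)
    (hξ₁ : IsSpecialOrthogonal ξ₁) (hξ₂ : IsSpecialOrthogonal ξ₂)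
    (hpolar : g = ξ₁ * Matrix.diagonal (fun i => Real.exp (a i)) * ξ₂)
    (hx : IsUnipotentUpper x)
    (hy : ∀ j, 1 ≤ j → j ≤ n - 1 → 0 < y j)
    (hξ : IsSpecialOrthogonal ξ)
    (hiw : g = x * iwasawaA n y * ξ) :
    (Real.exp (-(2 * Real.sqrt (∑ i, (a i) ^ 2))) ≤ y 1 ∧
      y 1 ≤ Real.exp (2 * Real.sqrt (∑ i, (a i) ^ 2))) ∧
    ∀ j, 2 ≤ j → j ≤ n - 1 →
      Real.exp (-(4 * Real.sqrt (∑ i, (a i) ^ 2))) ≤ y j ∧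
      y j ≤ Real.exp (4 * Real.sqrt (∑ i, (a i) ^ 2)) := by
  set σ := Real.sqrt (∑ i, (a i) ^ 2)
  have hξu := hξ.mem_unitaryGroup
  have hT : x * iwasawaA n y = ξ₁ * diagonal (fun i => Real.exp (a i)) * (ξ₂ * star ξ) := by
    rw [← mul_assoc, ← hpolar, hiw, mul_assoc _ ξ, Unitary.mul_star_self_of_mem hξu, mul_one]
  have hdiag (i : Fin n) : |iwasawaA n y i i| ∈ Set.Icc (Real.exp (-σ)) (Real.exp σ) := by
    rw [← hx.mul_iwasawaA_apply_self]
    exact abs_apply_self_mem_Icc_of_eq_unitary_mul_diagonal_exp_mul_unitary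
      (hx.blockTriangular.mul (iwasawaA_blockTriangular y)) hξ₁.mem_unitaryGroup
      (mul_mem hξ₂.mem_unitaryGroup (Unitary.star_mem hξu)) (abs_le_sqrt_sum_sq a) hT i
  have hbound (j : ℕ) (hj : 1 ≤ j) (hjn : j ≤ n - 1) :
      y j ∈ Set.Icc (Real.exp (-(2 * σ))) (Real.exp (2 * σ)) := by
    rw [← abs_of_pos (hy j hj hjn)]
    exact abs_mem_Icc_exp_two_mul_of_eq_mul (hdiag _) (hdiag _)
      (iwasawaA_apply_self_eq_mul y hj hjn)
  have hσ : 0 ≤ σ := Real.sqrt_nonneg _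
  refine ⟨hbound 1 le_rfl (by omega), fun j hj hjn => ?_⟩
  obtain ⟨hlow, hupp⟩ := hbound j (by omega) hjn
  exact ⟨(Real.exp_le_exp.2 (by linarith)).trans hlow,
    hupp.trans (Real.exp_le_exp.2 (by linarith))⟩

/-- Bounds on the Iwasawa coordinates of `g ∈ SL(n,ℝ)` in terms of the
polar height `σ(g) = √(a₁²+⋯+aₙ²)` of any polar decomposition
`g = ξ₁ · exp(diag a) · ξ₂`. -/
theorem stmt0 (n : ℕ) (hn : 2 ≤ n)
    (g x ξ ξ₁ ξ₂ : Matrix (Fin n) (Fin n) ℝ) (a : Fin n → ℝ) (y : ℕ → ℝ)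
    (hgdet : g.det = 1)
    (hξ₁ : IsSpecialOrthogonal ξ₁) (hξ₂ : IsSpecialOrthogonal ξ₂)
    (ha : ∑ i, a i = 0)
    (hpolar : g = ξ₁ * Matrix.diagonal (fun i => Real.exp (a i)) * ξ₂)
    (hx : IsUnipotentUpper x)
    (hy : ∀ j, 1 ≤ j → j ≤ n - 1 → 0 < y j)
    (hξ : IsSpecialOrthogonal ξ)
    (hiw : g = x * iwasawaA n y * ξ) :
    (Real.exp (-(2 * Real.sqrt (∑ i, (a i) ^ 2))) ≤ y 1 ∧
      y 1 ≤ Real.exp (2 * Real.sqrt (∑ i, (a i) ^ 2))) ∧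
    ∀ j, 2 ≤ j → j ≤ n - 1 →
      Real.exp (-(4 * Real.sqrt (∑ i, (a i) ^ 2))) ≤ y j ∧
      y j ≤ Real.exp (4 * Real.sqrt (∑ i, (a i) ^ 2)) :=
  stmt0_general n hn g x ξ ξ₁ ξ₂ a y hξ₁ hξ₂ hpolar hx hy hξ hiw
end

section
/- Let n ≥ 2 be an integer, δ > 0, and let ℓ = (ℓ₁,…,ℓₙ) ∈ ℂⁿ satisfy ℓ₁+⋯+ℓₙ = 0 and |Re(ℓⱼ)| < 1/2 for every j. Then for all real numbers t₁,…,tₙ with |tⱼ| ≤ δ for every j, one has |exp(Σ_{j=1}^n (ℓⱼ + (n−2j+1)/2)·tⱼ) − 1| < (4·(e^{n(n+6)δ/4} − 1)/(n(n+6))) · Σ_{j=1}^n |ℓⱼ + (n−2j+1)/2|. -/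
/-!
Put `z = ∑ⱼ (ℓⱼ + ρⱼ) tⱼ` with `ρⱼ = (n - 2j + 1)/2`. Since `exp z - 1 = z ∫₀¹ exp (s z) ds`,
`‖exp z - 1‖ ≤ ‖z‖ (exp B - 1)/B` as soon as `re z ≤ B`. Here `‖z‖ ≤ δ ∑ⱼ ‖ℓⱼ + ρⱼ‖`, and
`|re ℓⱼ| < 1/2` together with `∑ⱼ |ρⱼ| ≤ n²/4` gives `re z ≤ n(n+2)δ/4`. Since `exp` is strictly
convex, `(exp x - 1)/x` is strictly increasing, so one may enlarge `n(n+2)δ/4` to `n(n+6)δ/4`.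
-/

open Finset

theorem Real.integral_exp_mul_zero_one {B : ℝ} (hB : B ≠ 0) :
    ∫ s in (0 : ℝ)..1, Real.exp (B * s) = (Real.exp B - 1) / B := by
  rw [intervalIntegral.integral_comp_mul_left Real.exp hB, integral_exp]
  simp [div_eq_inv_mul]

theorem Complex.norm_exp_sub_one_le_of_re_le {z : ℂ} {B : ℝ} (hB : B ≠ 0) (hz : z.re ≤ B) :
    ‖Complex.exp z - 1‖ ≤ (Real.exp B - 1) / B * ‖z‖ := by
  rcases eq_or_ne z 0 with rfl | hz0
  · simp
  have hint : Complex.exp z - 1 = z * ∫ s in (0 : ℝ)..1, Complex.exp (z * s) := by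
    rw [integral_exp_mul_complex hz0]
    field_simp
    simp
  have hbound : ‖∫ s in (0 : ℝ)..1, Complex.exp (z * s)‖ ≤ (Real.exp B - 1) / B := by
    rw [← Real.integral_exp_mul_zero_one hB]
    refine intervalIntegral.norm_integral_le_of_norm_le zero_le_one
      (Filter.Eventually.of_forall fun s hs => ?_)
      (by apply Continuous.intervalIntegrable; fun_prop)
    rw [Complex.norm_exp, Complex.re_mul_ofReal, Real.exp_le_exp]
    exact mul_le_mul_of_nonneg_right hz hs.1.le
  rw [hint, norm_mul, mul_comm]
  exact mul_le_mul_of_nonneg_right hbound (norm_nonneg z)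

theorem Real.exp_sub_one_div_lt_of_lt {B M : ℝ} (hB : B ≠ 0) (hM : M ≠ 0) (h : B < M) :
    (Real.exp B - 1) / B < (Real.exp M - 1) / M := by
  simpa using strictConvexOn_exp.secant_strict_mono (Set.mem_univ 0) (Set.mem_univ B)
    (Set.mem_univ M) hB hM h

theorem sum_range_abs_sub_le (n : ℕ) :
    ∑ i ∈ range n, |(n : ℝ) - 1 - 2 * i| ≤ (n : ℝ) ^ 2 / 2 := by
  induction n using Nat.twoStepInduction with
  | zero => simp
  | one => norm_num
  | more m ih _ =>
    have hshift : ∑ i ∈ range (m + 2), |((m + 2 : ℕ) : ℝ) - 1 - 2 * i|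
        = ∑ i ∈ range m, |(m : ℝ) - 1 - 2 * i| + 2 * (m + 1) := by
      rw [sum_range_succ', sum_range_succ]
      push_cast
      have hm : (0 : ℝ) ≤ m := m.cast_nonneg
      rw [sum_congr rfl fun (i : ℕ) _ => congrArg abs
          (by ring : (m : ℝ) + 2 - 1 - 2 * ((i : ℝ) + 1) = m - 1 - 2 * i),
        abs_of_nonpos (by linarith), abs_of_nonneg (by linarith)]
      ring
    rw [hshift]
    push_cast
    linarith

section FinsetSum

variable {ι : Type*} (s : Finset ι) (w : ι → ℂ) {t : ι → ℝ} {δ : ℝ}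

theorem norm_sum_mul_ofReal_le (ht : ∀ j ∈ s, |t j| ≤ δ) :
    ‖∑ j ∈ s, w j * t j‖ ≤ δ * ∑ j ∈ s, ‖w j‖ := by
  rw [mul_sum]
  refine (norm_sum_le _ _).trans (sum_le_sum fun j hj => ?_)
  rw [norm_mul, Complex.norm_real, Real.norm_eq_abs, mul_comm]
  exact mul_le_mul_of_nonneg_right (ht j hj) (norm_nonneg _)

theorem re_sum_mul_ofReal_le (ht : ∀ j ∈ s, |t j| ≤ δ) :
    (∑ j ∈ s, w j * t j).re ≤ δ * ∑ j ∈ s, |(w j).re| := by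
  rw [Complex.re_sum, mul_sum]
  refine sum_le_sum fun j hj => ?_
  rw [Complex.re_mul_ofReal, mul_comm]
  calc t j * (w j).re ≤ |t j| * |(w j).re| := by rw [← abs_mul]; exact le_abs_self _
    _ ≤ δ * |(w j).re| := mul_le_mul_of_nonneg_right (ht j hj) (abs_nonneg _)

end FinsetSum

/-- `ρ`, the half-sum of the positive roots of `SL(n, ℝ)`, in coordinates `1 ≤ j ≤ n`. -/
noncomputable def rho (n j : ℕ) : ℂ := ((n : ℂ) - 2 * j + 1) / 2

theorem rho_re (n j : ℕ) : (rho n j).re = ((n : ℝ) - 2 * j + 1) / 2 := by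
  simp [rho]

theorem sum_Icc_abs_re_rho (n : ℕ) : ∑ j ∈ Icc 1 n, |(rho n j).re| ≤ (n : ℝ) ^ 2 / 4 := by
  rw [← Ico_add_one_right_eq_Icc, sum_Ico_eq_sum_range, Nat.add_sub_cancel]
  calc ∑ i ∈ range n, |(rho n (1 + i)).re| = (∑ i ∈ range n, |(n : ℝ) - 1 - 2 * i|) / 2 := by
        rw [sum_div]
        refine sum_congr rfl fun i _ => ?_
        rw [rho_re, abs_div, abs_two]
        push_cast
        ring_nf
    _ ≤ (n : ℝ) ^ 2 / 4 := by linarith [sum_range_abs_sub_le n]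

theorem sum_Icc_abs_re_add_rho_le (n : ℕ) (ℓ : ℕ → ℂ)
    (hre : ∀ j ∈ Icc 1 n, |(ℓ j).re| ≤ 1 / 2) :
    ∑ j ∈ Icc 1 n, |(ℓ j + rho n j).re| ≤ n * (n + 2) / 4 := by
  calc ∑ j ∈ Icc 1 n, |(ℓ j + rho n j).re|
      ≤ ∑ j ∈ Icc 1 n, (1 / 2 + |(rho n j).re|) := by
        refine sum_le_sum fun j hj => ?_
        rw [Complex.add_re]
        exact (abs_add_le _ _).trans (by gcongr; exact hre j hj)
    _ = n / 2 + ∑ j ∈ Icc 1 n, |(rho n j).re| := by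
        rw [sum_add_distrib, sum_const, Nat.card_Icc]
        simp [div_eq_mul_inv]
    _ ≤ n * (n + 2) / 4 := by linarith [sum_Icc_abs_re_rho n]

theorem sum_Icc_norm_add_rho_pos {n : ℕ} (hn : 2 ≤ n) {ℓ : ℕ → ℂ} (hre : |(ℓ 1).re| < 1 / 2) :
    0 < ∑ j ∈ Icc 1 n, ‖ℓ j + rho n j‖ := by
  have hpos : 0 < (ℓ 1 + rho n 1).re := by
    have : (2 : ℝ) ≤ n := by exact_mod_cast hn
    rw [Complex.add_re, rho_re]
    push_cast
    linarith [(abs_lt.1 hre).1]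
  have hne : ℓ 1 + rho n 1 ≠ 0 := fun h => hpos.ne' (by rw [h, Complex.zero_re])
  exact (norm_pos_iff.2 hne).trans_le <|
    single_le_sum (f := fun j => ‖ℓ j + rho n j‖) (fun _ _ => norm_nonneg _)
      (mem_Icc.2 ⟨le_rfl, by omega⟩)

theorem stmt6_general (n : ℕ) (hn : 2 ≤ n) (δ : ℝ) (hδ : 0 < δ) (ℓ : ℕ → ℂ)
    (hre : ∀ j ∈ Finset.Icc 1 n, |(ℓ j).re| < 1 / 2)
    (t : ℕ → ℝ) (ht : ∀ j ∈ Finset.Icc 1 n, |t j| ≤ δ) :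
    ‖Complex.exp
          (∑ j ∈ Finset.Icc 1 n, (ℓ j + ((n : ℂ) - 2 * j + 1) / 2) * (t j : ℂ)) - 1‖
      < (4 * (Real.exp ((n * (n + 6) : ℝ) * δ / 4) - 1) / ((n : ℝ) * (n + 6))) *
          ∑ j ∈ Finset.Icc 1 n, ‖ℓ j + ((n : ℂ) - 2 * j + 1) / 2‖ := by
  change ‖Complex.exp (∑ j ∈ Icc 1 n, (ℓ j + rho n j) * t j) - 1‖
    < _ * ∑ j ∈ Icc 1 n, ‖ℓ j + rho n j‖
  set z := ∑ j ∈ Icc 1 n, (ℓ j + rho n j) * t j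
  set S := ∑ j ∈ Icc 1 n, ‖ℓ j + rho n j‖
  have hn0 : (0 : ℝ) < n := Nat.cast_pos.2 (by omega)
  set B : ℝ := n * (n + 2) * δ / 4
  set M : ℝ := (n * (n + 6) : ℝ) * δ / 4
  have hB : 0 < B := by positivity
  have hBM : B < M := by simp only [B, M]; gcongr; linarith
  have hzre : z.re ≤ B :=
    calc z.re ≤ δ * ∑ j ∈ Icc 1 n, |(ℓ j + rho n j).re| := re_sum_mul_ofReal_le _ _ ht
      _ ≤ δ * (n * (n + 2) / 4) := by
          gcongr; exact sum_Icc_abs_re_add_rho_le n ℓ fun j hj => (hre j hj).le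
      _ = B := by ring
  have hS : 0 < S := sum_Icc_norm_add_rho_pos hn (hre 1 (mem_Icc.2 ⟨le_rfl, by omega⟩))
  calc ‖Complex.exp z - 1‖ ≤ (Real.exp B - 1) / B * ‖z‖ :=
        Complex.norm_exp_sub_one_le_of_re_le hB.ne' hzre
    _ ≤ (Real.exp B - 1) / B * (δ * S) := by
        have : 0 ≤ Real.exp B - 1 := by linarith [Real.add_one_le_exp B]
        gcongr
        exact norm_sum_mul_ofReal_le _ _ ht
    _ < (Real.exp M - 1) / M * (δ * S) := by
        have := Real.exp_sub_one_div_lt_of_lt hB.ne' (hB.trans hBM).ne' hBM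
        gcongr
    _ = _ := by simp only [M]; field_simp

/-- Pointwise estimate for `|φ_ℓ − 1|` on the ball `B_δ`, in terms of the
logarithms `tⱼ` of the Iwasawa diagonal coordinates. -/
theorem stmt6 (n : ℕ) (hn : 2 ≤ n) (δ : ℝ) (hδ : 0 < δ) (ℓ : ℕ → ℂ)
    (hsum : ∑ j ∈ Finset.Icc 1 n, ℓ j = 0)
    (hre : ∀ j ∈ Finset.Icc 1 n, |(ℓ j).re| < 1 / 2)
    (t : ℕ → ℝ) (ht : ∀ j ∈ Finset.Icc 1 n, |t j| ≤ δ) :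
    ‖Complex.exp
          (∑ j ∈ Finset.Icc 1 n, (ℓ j + ((n : ℂ) - 2 * j + 1) / 2) * (t j : ℂ)) - 1‖
      < (4 * (Real.exp ((n * (n + 6) : ℝ) * δ / 4) - 1) / ((n : ℝ) * (n + 6))) *
          ∑ j ∈ Finset.Icc 1 n, ‖ℓ j + ((n : ℂ) - 2 * j + 1) / 2‖ :=
  stmt6_general n hn δ hδ ℓ hre t ht
end
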